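/- If δ = 0, ε > 0, ‖x‖ > ε, x is (φ,ε,0)-feasible, and the open ball B(x,ε) is disjoint from image(φ), then Λ_0(φ,x,ε) = ∅. -/

import Mathlib

open scoped ENNReal RealInnerProductSpace Pointwise
open Metric Set

noncomputable section

variable {H : Type*} [NormedAddCommGroup H] [InnerProductSpace ℝ H]

/-- Feasible pairs `(𝔠, f)` of the linear inverse problem `LIP(φ, x, ε, δ)`:
`(c f)^(1/p) ≤ 𝔠` and `‖x - φ f‖ ≤ ε + δ 𝔠`. -/
def lipFeas (K : ℕ) (p : ℝ) (c : (Fin K → ℝ) → ℝ)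
    (φ : (Fin K → ℝ) →ₗ[ℝ] H) (x : H) (ε δ : ℝ) : Set (ℝ × (Fin K → ℝ)) :=
  {cf | c cf.2 ^ (1 / p) ≤ cf.1 ∧ ‖x - φ cf.2‖ ≤ ε + δ * cf.1}

/-- The optimal value `β(φ,x,ε,δ) ∈ [0,∞]` of `LIP(φ,x,ε,δ)`, i.e. the infimum of `𝔠^p`
over feasible pairs `(𝔠,f)`; it equals `∞` if the problem is infeasible. -/
def lipVal (K : ℕ) (p : ℝ) (c : (Fin K → ℝ) → ℝ)
    (φ : (Fin K → ℝ) →ₗ[ℝ] H) (x : H) (ε δ : ℝ) : ℝ≥0∞ :=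
  sInf ((fun cf : ℝ × (Fin K → ℝ) => ENNReal.ofReal (cf.1 ^ p)) '' lipFeas K p c φ x ε δ)

/-- `E(φ,x,ε,δ)`: the set of `f`-components of optimal solutions of `LIP(φ,x,ε,δ)`. -/
def lipEnc (K : ℕ) (p : ℝ) (c : (Fin K → ℝ) → ℝ)
    (φ : (Fin K → ℝ) →ₗ[ℝ] H) (x : H) (ε δ : ℝ) : Set (Fin K → ℝ) :=
  {f | ∃ 𝔠 : ℝ, (𝔠, f) ∈ lipFeas K p c φ x ε δ ∧
      ENNReal.ofReal (𝔠 ^ p) = lipVal K p c φ x ε δ}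

/-- The set `S_δ(φ,1) = {z : ∃ f, c f ≤ 1 ∧ ‖z - φ f‖ ≤ δ}`. -/
def lipSet (K : ℕ) (c : (Fin K → ℝ) → ℝ)
    (φ : (Fin K → ℝ) →ₗ[ℝ] H) (δ : ℝ) : Set H :=
  {z | ∃ f, c f ≤ 1 ∧ ‖z - φ f‖ ≤ δ}

/-- The dual function `‖λ‖'_φ = sup {⟨λ,z⟩ : z ∈ S_δ(φ,1)}`. -/
def lipDual (K : ℕ) (c : (Fin K → ℝ) → ℝ)
    (φ : (Fin K → ℝ) →ₗ[ℝ] H) (δ : ℝ) (l : H) : ℝ :=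
  sSup ((fun z => ⟪l, z⟫) '' lipSet K c φ δ)

/-- The set `Λ_δ(φ,x,ε)` of optimal dual variables: `λ` with `‖λ‖'_φ = 1` and
`⟨λ,x⟩ - ε‖λ‖ = (β(φ,x,ε,δ))^(1/p)`. -/
def lipLambda (K : ℕ) (p : ℝ) (c : (Fin K → ℝ) → ℝ)
    (φ : (Fin K → ℝ) →ₗ[ℝ] H) (x : H) (ε δ : ℝ) : Set H :=
  {l | lipDual K c φ δ l = 1 ∧
      ENNReal.ofReal (⟪l, x⟫ - ε * ‖l‖) = lipVal K p c φ x ε δ ^ (1 / p)}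

/-!
Let `μ` be the component of `x` orthogonal to `range φ`. A feasible `f` gives `‖μ‖ ≤ ‖x - φ f‖ ≤ ε`,
and the disjointness of `B(x, ε)` from `range φ` gives `‖μ‖ ≥ ε`; hence `‖μ‖ = ε` and
`⟪μ, x⟫ = ε²`. Since `μ ⊥ range φ ⊇ S_0(φ,1)`, replacing `λ` by `λ + μ` leaves `‖λ‖'_φ` unchanged,
while `⟪λ + μ, x⟫ - ε‖λ + μ‖ > ⟪λ, x⟫ - ε‖λ‖` by the strict triangle inequality, unless `λ` is a
nonnegative multiple of `μ`, in which case `‖λ‖'_φ = 0`. Weak duality bounds the dual objective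
by `β^(1/p)`, so no `λ` attains it. The hypothesis `‖x‖ > ε` makes `β > 0`, which rules out the
truncation of a negative dual objective by `ENNReal.ofReal`.
-/

section Cost

variable {K : ℕ} {p : ℝ} {c : (Fin K → ℝ) → ℝ}

lemma cost_zero (hp : 0 < p)
    (hhom : ∀ (α : ℝ) (f : Fin K → ℝ), 0 ≤ α → c (α • f) = α ^ p * c f) : c 0 = 0 := by
  simpa [Real.zero_rpow hp.ne'] using hhom 0 0 le_rfl

lemma eq_zero_of_cost_eq_zero
    (hhom : ∀ (α : ℝ) (f : Fin K → ℝ), 0 ≤ α → c (α • f) = α ^ p * c f)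
    (hbdd : Bornology.IsBounded {f | c f ≤ 1}) {f : Fin K → ℝ} (hf : c f = 0) : f = 0 := by
  by_contra hf0
  obtain ⟨M, hM⟩ := hbdd.exists_norm_le
  have hnorm : 0 < ‖f‖ := norm_pos_iff.mpr hf0
  have hmem : c (((max M 0 + 1) / ‖f‖) • f) ≤ 1 := by
    rw [hhom _ _ (by positivity), hf, mul_zero]
    exact zero_le_one
  have hle := hM _ hmem
  rw [norm_smul, Real.norm_of_nonneg (by positivity), div_mul_cancel₀ _ hnorm.ne'] at hle
  linarith [le_max_left M 0]

lemma cost_inv_smul_le_one (hp : 0 < p) (hc0 : ∀ f, 0 ≤ c f)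
    (hhom : ∀ (α : ℝ) (f : Fin K → ℝ), 0 ≤ α → c (α • f) = α ^ p * c f)
    {f : Fin K → ℝ} {𝔠 : ℝ} (h𝔠 : 0 < 𝔠) (hf : c f ^ (1 / p) ≤ 𝔠) : c (𝔠⁻¹ • f) ≤ 1 := by
  have hcf : c f ≤ 𝔠 ^ p := by
    simpa [← Real.rpow_mul (hc0 f), hp.ne'] using
      Real.rpow_le_rpow (Real.rpow_nonneg (hc0 f) _) hf hp.le
  calc c (𝔠⁻¹ • f) = 𝔠⁻¹ ^ p * c f := hhom _ _ (inv_nonneg.mpr h𝔠.le)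
    _ ≤ 𝔠⁻¹ ^ p * 𝔠 ^ p := by gcongr
    _ = 1 := by rw [← Real.mul_rpow (by positivity) h𝔠.le, inv_mul_cancel₀ h𝔠.ne', Real.one_rpow]

end Cost

section Duality

variable {K : ℕ} {p : ℝ} {c : (Fin K → ℝ) → ℝ} {φ : (Fin K → ℝ) →ₗ[ℝ] H} {x : H} {ε : ℝ}

lemma lipSet_zero : lipSet K c φ 0 = φ '' {f | c f ≤ 1} := by
  ext z
  constructor
  · rintro ⟨f, hf, hz⟩
    exact ⟨f, hf, (sub_eq_zero.mp (norm_le_zero_iff.mp hz)).symm⟩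
  · rintro ⟨f, hf, rfl⟩
    exact ⟨f, hf, by simp⟩

lemma lipSet_zero_subset_range : lipSet K c φ 0 ⊆ LinearMap.range φ := by
  rw [lipSet_zero]
  exact image_subset_range _ _

lemma le_lipDual_zero (hcpt : IsCompact {f | c f ≤ 1}) (l : H) {z : H}
    (hz : z ∈ lipSet K c φ 0) : ⟪l, z⟫ ≤ lipDual K c φ 0 l := by
  have hS : IsCompact (lipSet K c φ 0) := by
    rw [lipSet_zero]
    exact hcpt.image φ.continuous_of_finiteDimensional
  have hcont : Continuous fun z : H => ⟪l, z⟫ := by fun_prop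
  exact le_csSup (hS.image hcont).bddAbove ⟨z, hz, rfl⟩

lemma lipDual_add_of_mem_orthogonal {l μ : H} (hμ : μ ∈ (LinearMap.range φ)ᗮ) :
    lipDual K c φ 0 (l + μ) = lipDual K c φ 0 l := by
  refine congrArg sSup (image_congr fun z hz => ?_)
  rw [inner_add_left, (Submodule.mem_orthogonal' _ _).mp hμ z (lipSet_zero_subset_range hz),
    add_zero]

lemma lipDual_eq_zero_of_mem_orthogonal (hp : 0 < p)
    (hhom : ∀ (α : ℝ) (f : Fin K → ℝ), 0 ≤ α → c (α • f) = α ^ p * c f) {μ : H}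
    (hμ : μ ∈ (LinearMap.range φ)ᗮ) : lipDual K c φ 0 μ = 0 := by
  have hS : (lipSet K c φ 0).Nonempty := ⟨0, 0, (cost_zero hp hhom).trans_le zero_le_one, by simp⟩
  rw [← zero_add μ, lipDual_add_of_mem_orthogonal hμ, lipDual]
  simp only [inner_zero_left]
  rw [hS.image_const, csSup_singleton]

lemma inner_le_mul_lipDual (hp : 0 < p) (hc0 : ∀ f, 0 ≤ c f)
    (hhom : ∀ (α : ℝ) (f : Fin K → ℝ), 0 ≤ α → c (α • f) = α ^ p * c f)
    (hcpt : IsCompact {f | c f ≤ 1}) (l : H) {f : Fin K → ℝ} {𝔠 : ℝ} (hf : c f ^ (1 / p) ≤ 𝔠) :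
    ⟪l, φ f⟫ ≤ 𝔠 * lipDual K c φ 0 l := by
  rcases (Real.rpow_nonneg (hc0 f) _ |>.trans hf).eq_or_lt with rfl | h𝔠
  · have hcf : c f = 0 :=
      (Real.rpow_eq_zero (hc0 f) (by positivity)).mp ((Real.rpow_nonneg (hc0 f) _).antisymm' hf)
    simp [eq_zero_of_cost_eq_zero hhom hcpt.isBounded hcf]
  · have hz : φ (𝔠⁻¹ • f) ∈ lipSet K c φ 0 := ⟨_, cost_inv_smul_le_one hp hc0 hhom h𝔠 hf, by simp⟩
    have := le_lipDual_zero hcpt l hz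
    rwa [map_smul, real_inner_smul_right, inv_mul_le_iff₀ h𝔠] at this

lemma inner_sub_mul_norm_le_mul_lipDual (hp : 0 < p) (hc0 : ∀ f, 0 ≤ c f)
    (hhom : ∀ (α : ℝ) (f : Fin K → ℝ), 0 ≤ α → c (α • f) = α ^ p * c f)
    (hcpt : IsCompact {f | c f ≤ 1}) (l : H) {q : ℝ × (Fin K → ℝ)}
    (hq : q ∈ lipFeas K p c φ x ε 0) : ⟪l, x⟫ - ε * ‖l‖ ≤ q.1 * lipDual K c φ 0 l := by
  obtain ⟨hcost, hdist⟩ := hq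
  rw [zero_mul, add_zero] at hdist
  have hfar : ⟪l, x - φ q.2⟫ ≤ ε * ‖l‖ := by
    calc ⟪l, x - φ q.2⟫ ≤ ‖l‖ * ‖x - φ q.2‖ := real_inner_le_norm _ _
      _ ≤ ε * ‖l‖ := by rw [mul_comm]; gcongr
  have := inner_le_mul_lipDual hp hc0 hhom hcpt l hcost (φ := φ)
  rw [inner_sub_right] at hfar
  linarith

lemma lipFeas_nonempty_of_lipVal_ne_top {δ : ℝ} (h : lipVal K p c φ x ε δ ≠ ⊤) :
    (lipFeas K p c φ x ε δ).Nonempty := by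
  by_contra hempty
  exact h (by rw [lipVal, not_nonempty_iff_eq_empty.mp hempty, image_empty, sInf_empty])

lemma ofReal_le_lipVal_rpow (hp : 0 < p) {δ a : ℝ} (ha : ∀ q ∈ lipFeas K p c φ x ε δ, a ≤ q.1) :
    ENNReal.ofReal a ≤ lipVal K p c φ x ε δ ^ (1 / p) := by
  rcases le_or_gt a 0 with ha0 | ha0
  · simp [ENNReal.ofReal_of_nonpos ha0]
  have hval : ENNReal.ofReal (a ^ p) ≤ lipVal K p c φ x ε δ := by
    refine le_sInf ?_
    rintro _ ⟨q, hq, rfl⟩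
    exact ENNReal.ofReal_le_ofReal (Real.rpow_le_rpow ha0.le (ha q hq) hp.le)
  calc ENNReal.ofReal a = ENNReal.ofReal (a ^ p) ^ (1 / p) := by
        rw [← ENNReal.ofReal_rpow_of_pos ha0, ← ENNReal.rpow_mul, mul_one_div_cancel hp.ne',
          ENNReal.rpow_one]
    _ ≤ lipVal K p c φ x ε δ ^ (1 / p) := by gcongr

/-- Weak duality with `λ = x` bounds feasible costs away from zero. -/
lemma exists_pos_le_of_mem_lipFeas (hp : 0 < p) (hc0 : ∀ f, 0 ≤ c f)
    (hhom : ∀ (α : ℝ) (f : Fin K → ℝ), 0 ≤ α → c (α • f) = α ^ p * c f)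
    (hcpt : IsCompact {f | c f ≤ 1}) (hε : 0 ≤ ε) (hx : ε < ‖x‖) :
    ∃ a > 0, ∀ q ∈ lipFeas K p c φ x ε 0, a ≤ q.1 := by
  have hwd := fun q (hq : q ∈ lipFeas K p c φ x ε 0) =>
    inner_sub_mul_norm_le_mul_lipDual hp hc0 hhom hcpt x hq
  have hpos : 0 < ⟪x, x⟫ - ε * ‖x‖ := by
    rw [real_inner_self_eq_norm_sq]
    nlinarith [mul_pos (hε.trans_lt hx) (sub_pos.mpr hx)]
  rcases (lipFeas K p c φ x ε 0).eq_empty_or_nonempty with h | ⟨q₀, hq₀⟩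
  · exact ⟨1, one_pos, by simp [h]⟩
  have hD : 0 < lipDual K c φ 0 x :=
    pos_of_mul_pos_right (hpos.trans_le (hwd q₀ hq₀)) ((Real.rpow_nonneg (hc0 _) _).trans hq₀.1)
  exact ⟨_, div_pos hpos hD, fun q hq => (div_le_iff₀ hD).mpr (hwd q hq)⟩

end Duality

lemma norm_sub_starProjection_eq_of_disjoint {R : Submodule ℝ H} [R.HasOrthogonalProjection]
    {x w : H} {ε : ℝ} (hdisj : ball x ε ∩ R = ∅) (hw : w ∈ R) (hxw : ‖x - w‖ ≤ ε) :
    ‖x - R.starProjection x‖ = ε := by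
  refine le_antisymm ?_ (not_lt.mp fun h => ?_)
  · rw [Submodule.starProjection_minimal]
    exact (ciInf_le ⟨0, by rintro _ ⟨_, rfl⟩; positivity⟩ ⟨w, hw⟩).trans hxw
  · refine hdisj.subset ⟨?_, R.starProjection_apply_mem x⟩
    rwa [mem_ball, dist_comm, dist_eq_norm]

lemma real_inner_sub_starProjection_self (R : Submodule ℝ H) [R.HasOrthogonalProjection] (x : H) :
    ⟪x - R.starProjection x, x⟫ = ‖x - R.starProjection x‖ ^ 2 := by
  calc ⟪x - R.starProjection x, x⟫
      = ⟪x - R.starProjection x, (x - R.starProjection x) + R.starProjection x⟫ := by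
        rw [sub_add_cancel]
    _ = ‖x - R.starProjection x‖ ^ 2 := by
      rw [inner_add_right, R.starProjection_inner_eq_zero x _ (R.starProjection_apply_mem x),
        real_inner_self_eq_norm_sq, add_zero]

lemma inner_sub_mul_norm_lt_of_not_sameRay {l μ x : H} {ε : ℝ} (hε : 0 < ε) (hμ : ‖μ‖ = ε)
    (hμx : ⟪μ, x⟫ = ε ^ 2) (hray : ¬SameRay ℝ l μ) :
    ⟪l, x⟫ - ε * ‖l‖ < ⟪l + μ, x⟫ - ε * ‖l + μ‖ := by
  have hlt : ‖l + μ‖ < ‖l‖ + ε :=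
    hμ ▸ (norm_add_le l μ).lt_of_ne fun h => hray (sameRay_iff_norm_add.mpr h)
  have := mul_lt_mul_of_pos_left hlt hε
  rw [inner_add_left, hμx]
  nlinarith

theorem lambda_empty_general
    (K : ℕ) (p : ℝ) (c : (Fin K → ℝ) → ℝ)
    (φ : (Fin K → ℝ) →ₗ[ℝ] H) (x : H) (ε : ℝ)
    (hp : 0 < p) (hc0 : ∀ f, 0 ≤ c f)
    (hhom : ∀ (α : ℝ) (f : Fin K → ℝ), 0 ≤ α → c (α • f) = α ^ p * c f)
    (hcpt : IsCompact {f | c f ≤ 1})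
    (hε : 0 < ε) (hx : ε < ‖x‖)
    (hfeas : lipVal K p c φ x ε 0 ≠ ⊤)
    (hdisj : ball x ε ∩ (LinearMap.range φ : Set H) = ∅) :
    lipLambda K p c φ x ε 0 = ∅ := by
  refine eq_empty_iff_forall_notMem.mpr fun l ⟨hdual, hopt⟩ => ?_
  obtain ⟨q₀, hq₀⟩ := lipFeas_nonempty_of_lipVal_ne_top hfeas
  set R := LinearMap.range φ
  set μ := x - R.starProjection x
  have hμR : μ ∈ Rᗮ := R.sub_starProjection_mem_orthogonal x
  have hμ : ‖μ‖ = ε :=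
    norm_sub_starProjection_eq_of_disjoint hdisj ⟨q₀.2, rfl⟩ (by simpa using hq₀.2)
  have hμx : ⟪μ, x⟫ = ε ^ 2 := hμ ▸ real_inner_sub_starProjection_self R x
  obtain ⟨a, ha, hle⟩ := exists_pos_le_of_mem_lipFeas hp hc0 hhom hcpt hε.le hx (φ := φ)
  have hb : 0 < ⟪l, x⟫ - ε * ‖l‖ := by
    have := (ofReal_le_lipVal_rpow hp hle).trans_eq hopt.symm
    exact ha.trans_le ((ENNReal.ofReal_le_ofReal_iff' .. |>.mp this).resolve_right ha.not_ge)
  by_cases hray : SameRay ℝ l μ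
  · obtain ⟨t, -, rfl⟩ := hray.symm.exists_nonneg_left (norm_pos_iff.mp (by rw [hμ]; exact hε))
    rw [lipDual_eq_zero_of_mem_orthogonal hp hhom (Rᗮ.smul_mem t hμR)] at hdual
    exact zero_ne_one hdual
  · have hdual' := (lipDual_add_of_mem_orthogonal hμR (l := l)).trans hdual
    have hwd := ofReal_le_lipVal_rpow (φ := φ) (x := x) (ε := ε) (δ := 0) hp fun q hq => by
      simpa only [hdual', mul_one] using
        inner_sub_mul_norm_le_mul_lipDual hp hc0 hhom hcpt (l + μ) hq
    rw [← hopt, ENNReal.ofReal_le_ofReal_iff hb.le] at hwd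
    exact (inner_sub_mul_norm_lt_of_not_sameRay hε hμ hμx hray).not_ge hwd

/-- If `δ = 0`, `ε > 0`, `‖x‖ > ε`, `x` is `(φ,ε,0)`-feasible, and the
open ball `B(x,ε)` is disjoint from `image φ`, then `Λ_0(φ,x,ε) = ∅`. -/
theorem lambda_empty
    [FiniteDimensional ℝ H]
    (K : ℕ) (p : ℝ) (c : (Fin K → ℝ) → ℝ)
    (φ : (Fin K → ℝ) →ₗ[ℝ] H) (x : H) (ε : ℝ)
    (hp : 0 < p) (hc0 : ∀ f, 0 ≤ c f)
    (hhom : ∀ (α : ℝ) (f : Fin K → ℝ), 0 ≤ α → c (α • f) = α ^ p * c f)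
    (hconv : Convex ℝ {f | c f ≤ 1}) (hcpt : IsCompact {f | c f ≤ 1})
    (hε : 0 < ε) (hx : ε < ‖x‖)
    (hfeas : lipVal K p c φ x ε 0 ≠ ⊤)
    (hdisj : ball x ε ∩ (LinearMap.range φ : Set H) = ∅) :
    lipLambda K p c φ x ε 0 = ∅ :=
  lambda_empty_general K p c φ x ε hp hc0 hhom hcpt hε hx hfeas hdisj
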